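/- Let (R, m) be a Noetherian local ring of prime characteristic p > 0, let a ⊆ R be an ideal, and suppose that a admits a reduction q ⊆ a generated by h elements (i.e. there exists an integer n ≥ 0 with q·aⁿ = aⁿ⁺¹). Then there exists an integer t ≥ 0 such that for all non-negative integers e and ℓ one has the inclusions a^(ℓ·pᵉ + h·(pᵉ−1) + 1 + t) ⊆ (a^(ℓ+1))^[pᵉ] ⊆ a^((ℓ+1)·pᵉ). -/

import Mathlib

/-!
Since `q * a ^ n = a ^ (n + 1)`, we get `a ^ (N + n) ≤ q ^ N` for all `N`, so `t = n` works as soon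
as `q ^ N ≤ (q ^ (ℓ + 1))^[pᵉ]` for `N = ℓ pᵉ + h (pᵉ - 1) + 1`. This is a pigeonhole argument: if a
monomial of degree `N` in the `h` generators of `q` has exponents `cᵢ`, then `∑ cᵢ / pᵉ ≥ ℓ + 1`,
so the monomial is a multiple of the `pᵉ`-th power of a monomial of degree at least `ℓ + 1`.
The other inclusion is just `x ^ pᵉ ∈ b ^ pᵉ` for `x ∈ b`.
-/

/-- The `e`-th Frobenius power `a^[p^e]` of an ideal `a`: the ideal generated by the
`p^e`-th powers of the elements of `a`. -/
def frobeniusPower {R : Type*} [CommRing R] (p e : ℕ) (a : Ideal R) : Ideal R :=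
  Ideal.span ((fun x => x ^ p ^ e) '' (a : Set R))

open Pointwise

theorem Set.exists_eq_prod_pow_of_mem_pow {M : Type*} [CommMonoid M] [DecidableEq M]
    {s : Finset M} {N : ℕ} {z : M} (hz : z ∈ (s : Set M) ^ N) :
    ∃ c : M → ℕ, ∑ x ∈ s, c x = N ∧ z = ∏ x ∈ s, x ^ c x := by
  obtain ⟨f, rfl⟩ := Set.mem_pow.mp hz
  set l := List.ofFn fun i ↦ (f i : M)
  have hl : ∀ x ∈ l, x ∈ s := by simp [l]
  refine ⟨l.count, ?_,
    Finset.prod_list_count_of_subset l s fun x hx ↦ hl x (List.mem_toFinset.mp hx)⟩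
  simpa [l] using Multiset.sum_count_eq_card (m := (l : Multiset M)) hl

theorem Finset.lt_sum_div_of_lt_sum {ι : Type*} (s : Finset ι) (c : ι → ℕ) {k m : ℕ} (hk : 0 < k)
    (h : m * k + s.card * (k - 1) < ∑ i ∈ s, c i) : m < ∑ i ∈ s, c i / k := by
  have hc : ∑ i ∈ s, c i ≤ k * ∑ i ∈ s, c i / k + s.card * (k - 1) := calc
    ∑ i ∈ s, c i ≤ ∑ i ∈ s, (k * (c i / k) + (k - 1)) := by
      gcongr with i
      have := Nat.div_add_mod (c i) k
      have := Nat.mod_lt (c i) hk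
      omega
    _ = k * ∑ i ∈ s, c i / k + s.card * (k - 1) := by
      rw [Finset.sum_add_distrib, Finset.mul_sum, Finset.sum_const, smul_eq_mul]
  exact Nat.lt_of_mul_lt_mul_left (a := k) (by rw [mul_comm k m]; omega)

theorem pow_add_eq_pow_mul_pow_of_mul_pow_eq {M : Type*} [CommMonoid M] {a q : M} {n : ℕ}
    (h : q * a ^ n = a ^ (n + 1)) (j : ℕ) : a ^ (j + n) = q ^ j * a ^ n := by
  induction j with
  | zero => simp
  | succ j ih =>
    rw [add_right_comm, pow_succ, ih, mul_assoc, ← pow_succ, ← h, ← mul_assoc, ← pow_succ]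

namespace Ideal

variable {R : Type*} [CommRing R]

theorem prod_pow_mem_span_image_pow {s : Finset R} {c : R → ℕ} {k m : ℕ} (hk : 0 < k)
    (h : m * k + s.card * (k - 1) < ∑ x ∈ s, c x) :
    ∏ x ∈ s, x ^ c x ∈ span ((· ^ k) '' ↑(span (s : Set R) ^ (m + 1))) := by
  have hsplit : ∏ x ∈ s, x ^ c x = (∏ x ∈ s, x ^ (c x / k)) ^ k * ∏ x ∈ s, x ^ (c x % k) := by
    rw [← Finset.prod_pow, ← Finset.prod_mul_distrib]
    refine Finset.prod_congr rfl fun x _ ↦ ?_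
    rw [← pow_mul, ← pow_add, mul_comm, Nat.div_add_mod]
  have hmem : ∏ x ∈ s, x ^ (c x / k) ∈ span (s : Set R) ^ (m + 1) := by
    refine pow_le_pow_right (Finset.lt_sum_div_of_lt_sum s c hk h) ?_
    rw [← Finset.prod_pow_eq_pow_sum]
    exact prod_mem_prod fun x hx ↦ pow_mem_pow (subset_span hx) _
  rw [hsplit]
  exact mul_mem_right _ _ (subset_span ⟨_, hmem, rfl⟩)

theorem span_pow_le_span_image_pow (s : Finset R) {k : ℕ} (hk : 0 < k) (m : ℕ) :
    span (s : Set R) ^ (m * k + s.card * (k - 1) + 1) ≤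
      span ((· ^ k) '' ↑(span (s : Set R) ^ (m + 1))) := by
  classical
  rw [Submodule.span_pow, span_le]
  intro z hz
  obtain ⟨c, hc, rfl⟩ := Set.exists_eq_prod_pow_of_mem_pow hz
  exact prod_pow_mem_span_image_pow hk (by omega)

end Ideal

theorem frobeniusPower_mono {R : Type*} [CommRing R] (p e : ℕ) {a b : Ideal R} (hab : a ≤ b) :
    frobeniusPower p e a ≤ frobeniusPower p e b :=
  Ideal.span_mono (Set.image_mono hab)

theorem frobeniusPower_le_pow {R : Type*} [CommRing R] (p e : ℕ) (a : Ideal R) :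
    frobeniusPower p e a ≤ a ^ p ^ e :=
  Ideal.span_le.mpr <| Set.image_subset_iff.mpr fun _ hx ↦ Ideal.pow_mem_pow hx _

theorem exists_pigeonhole_frobeniusPower_of_reduction_general
    {R : Type*} [CommRing R]
    (p : ℕ) (hp : p.Prime)
    (a q : Ideal R) (h : ℕ) (hqa : q ≤ a)
    (hgen : ∃ s : Finset R, s.card = h ∧ q = Ideal.span (s : Set R))
    (hred : ∃ n : ℕ, q * a ^ n = a ^ (n + 1)) :
    ∃ t : ℕ, ∀ e ℓ : ℕ,
      a ^ (ℓ * p ^ e + h * (p ^ e - 1) + 1 + t) ≤ frobeniusPower p e (a ^ (ℓ + 1)) ∧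
      frobeniusPower p e (a ^ (ℓ + 1)) ≤ a ^ ((ℓ + 1) * p ^ e) := by
  obtain ⟨s, rfl, rfl⟩ := hgen
  obtain ⟨n, hn⟩ := hred
  refine ⟨n, fun e ℓ ↦ ⟨?_, ?_⟩⟩
  · set N := ℓ * p ^ e + s.card * (p ^ e - 1) + 1
    calc a ^ (N + n) = Ideal.span (s : Set R) ^ N * a ^ n :=
          pow_add_eq_pow_mul_pow_of_mul_pow_eq hn N
      _ ≤ Ideal.span (s : Set R) ^ N := Ideal.mul_le_left
      _ ≤ frobeniusPower p e (Ideal.span (s : Set R) ^ (ℓ + 1)) :=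
          Ideal.span_pow_le_span_image_pow s (pow_pos hp.pos e) ℓ
      _ ≤ frobeniusPower p e (a ^ (ℓ + 1)) :=
          frobeniusPower_mono p e (Ideal.pow_right_mono hqa _)
  · rw [pow_mul]
    exact frobeniusPower_le_pow p e _

/-- Let `(R, m)` be a Noetherian local ring of prime characteristic `p > 0` and let
`a ⊆ R` be an ideal admitting a reduction `q ⊆ a` generated by `h` elements
(i.e. `q · aⁿ = aⁿ⁺¹` for some `n ≥ 0`). Then there is an integer `t ≥ 0` such that
for all `e, ℓ ≥ 0` we have
`a^(ℓ·pᵉ + h·(pᵉ−1) + 1 + t) ⊆ (a^(ℓ+1))^[pᵉ] ⊆ a^((ℓ+1)·pᵉ)`. -/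
theorem exists_pigeonhole_frobeniusPower_of_reduction
    {R : Type*} [CommRing R] [IsNoetherianRing R] [IsLocalRing R]
    (p : ℕ) (hp : p.Prime) [CharP R p]
    (a q : Ideal R) (h : ℕ) (hqa : q ≤ a)
    (hgen : ∃ s : Finset R, s.card = h ∧ q = Ideal.span (s : Set R))
    (hred : ∃ n : ℕ, q * a ^ n = a ^ (n + 1)) :
    ∃ t : ℕ, ∀ e ℓ : ℕ,
      a ^ (ℓ * p ^ e + h * (p ^ e - 1) + 1 + t) ≤ frobeniusPower p e (a ^ (ℓ + 1)) ∧
      frobeniusPower p e (a ^ (ℓ + 1)) ≤ a ^ ((ℓ + 1) * p ^ e) :=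
  exists_pigeonhole_frobeniusPower_of_reduction_general p hp a q h hqa hgen hred
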